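/- arXiv:1404.1907 — 3 statements merged into one kernel-verified Lean document; each statement's English description precedes it below -/
import Mathlib

section
/- Let A be a C*-algebra and α : A → A a *-endomorphism. Then the radical ideal R_α = closure(∪_{n≥1} ker(αⁿ)) is a closed two-sided ideal of A which is invariant under α, i.e. α(R_α) ⊆ R_α, and the induced endomorphism α̇ on the quotient A/R_α is injective. -/
open scoped CStarAlgebra

section Aux

variable {A : Type*} [CStarAlgebra A] (α : A →⋆ₐ[ℂ] A)

lemma aux_iter_coe (n : ℕ) : (⇑α)^[n] = ⇑(α ^ n) := by
  induction n with
  | zero => ext x; show x = (1 : A →⋆ₐ[ℂ] A) x; rfl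
  | succ n ih => ext x; rw [Function.iterate_succ_apply', ih, pow_succ']; rfl

example (n : ℕ) (a : A) : ‖(α ^ n) a‖ ≤ ‖a‖ := NonUnitalStarAlgHom.norm_apply_le _ a
example : Continuous α := map_continuous α
example {x : A} (hx : IsSelfAdjoint x) (n : ℕ) : IsSelfAdjoint ((α ^ n) x) := hx.map _
example {x : A} (hx : IsSelfAdjoint x) {t : ℝ} (ht : t ∈ spectrum ℝ x) : |t| ≤ ‖x‖ := by
  have := norm_apply_le_norm_cfc (fun t : ℝ => t) x ht
  rwa [cfc_id' ℝ x, Real.norm_eq_abs] at this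

end Aux

section Aux2
variable {A : Type*} [CStarAlgebra A] (α : A →⋆ₐ[ℂ] A)

lemma aux_selfAdjoint_mem {x : A} (hx : IsSelfAdjoint x)
    (h : ∀ ε > 0, ∃ n : ℕ, ‖(⇑α)^[n + 1] x‖ < ε) :
    x ∈ closure (⋃ n : ℕ, {a : A | (⇑α)^[n + 1] a = 0}) := by
  rw [Metric.mem_closure_iff]
  intro ε hε
  obtain ⟨n, hn⟩ := h ε hε
  rw [aux_iter_coe] at hn
  set β := α ^ (n + 1) with hβ
  set c := ‖β x‖ with hc
  have hc0 : (0 : ℝ) ≤ c := norm_nonneg _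
  set f : ℝ → ℝ := fun t => t - max (-c) (min c t) with hf
  have hfc : Continuous f := by fun_prop
  have hβx : IsSelfAdjoint (β x) := hx.map β
  refine ⟨cfc f x, ?_, ?_⟩
  · refine Set.mem_iUnion.mpr ⟨n, ?_⟩
    show (⇑α)^[n + 1] (cfc f x) = 0
    rw [aux_iter_coe]
    rw [StarAlgHom.map_cfc β f x]
    rw [cfc_congr (g := fun _ : ℝ => (0 : ℝ)) ?_, cfc_const_zero]
    intro t ht
    have habs : |t| ≤ c := by
      have := norm_apply_le_norm_cfc (fun t : ℝ => t) (β x) ht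
      rwa [cfc_id' ℝ (β x), Real.norm_eq_abs, ← hc] at this
    have h1 : min c t = t := min_eq_right (le_of_abs_le habs)
    have h2 : max (-c) t = t := max_eq_right (neg_le_of_abs_le habs)
    simp [hf, h1, h2]
  · rw [dist_eq_norm]
    have hsub : x - cfc f x = cfc (fun t : ℝ => max (-c) (min c t)) x := by
      rw [show (fun t : ℝ => max (-c) (min c t)) = fun t : ℝ => t - f t by ext t; simp [hf],
        cfc_sub (fun t : ℝ => t) f x, cfc_id' ℝ x]
    rw [hsub]
    refine lt_of_le_of_lt (norm_cfc_le hc0 fun t _ => ?_) hn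
    rw [Real.norm_eq_abs, abs_le]
    constructor
    · exact le_max_left _ _
    · exact max_le (by linarith) (min_le_left _ _)

end Aux2

/-- For a *-endomorphism `α` of a C*-algebra `A`, the radical ideal
`R_α = closure (⋃ n ≥ 1, ker αⁿ)` is a closed two-sided ideal, invariant under
`α`, and the induced endomorphism on the quotient `A / R_α` is injective
(i.e. `α a ∈ R_α → a ∈ R_α`). -/
theorem radical_ideal_properties
    {A : Type*} [NormedRing A] [StarRing A] [CStarRing A] [NormedAlgebra ℂ A]
    [StarModule ℂ A] [CompleteSpace A]
    (α : A →⋆ₐ[ℂ] A) :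
    IsClosed (closure (⋃ n : ℕ, {a : A | (⇑α)^[n + 1] a = 0})) ∧
    (0 : A) ∈ closure (⋃ n : ℕ, {a : A | (⇑α)^[n + 1] a = 0}) ∧
    (∀ a b : A, a ∈ closure (⋃ n : ℕ, {a : A | (⇑α)^[n + 1] a = 0}) →
      b ∈ closure (⋃ n : ℕ, {a : A | (⇑α)^[n + 1] a = 0}) →
      a + b ∈ closure (⋃ n : ℕ, {a : A | (⇑α)^[n + 1] a = 0})) ∧
    (∀ a b : A, a ∈ closure (⋃ n : ℕ, {a : A | (⇑α)^[n + 1] a = 0}) →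
      a * b ∈ closure (⋃ n : ℕ, {a : A | (⇑α)^[n + 1] a = 0}) ∧
      b * a ∈ closure (⋃ n : ℕ, {a : A | (⇑α)^[n + 1] a = 0})) ∧
    (∀ a : A, a ∈ closure (⋃ n : ℕ, {a : A | (⇑α)^[n + 1] a = 0}) →
      α a ∈ closure (⋃ n : ℕ, {a : A | (⇑α)^[n + 1] a = 0})) ∧
    (∀ a : A, α a ∈ closure (⋃ n : ℕ, {a : A | (⇑α)^[n + 1] a = 0}) →
      a ∈ closure (⋃ n : ℕ, {a : A | (⇑α)^[n + 1] a = 0})) := by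
  letI : CStarAlgebra A := { }
  set U : Set A := ⋃ n : ℕ, {a : A | (⇑α)^[n + 1] a = 0} with hU
  have hmemU : ∀ {x : A} {n : ℕ}, (⇑α)^[n + 1] x = 0 → x ∈ U := by
    intro x n h
    exact Set.mem_iUnion.mpr ⟨n, h⟩
  have hzeroU : (0 : A) ∈ U := by
    refine hmemU (n := 0) ?_
    rw [aux_iter_coe]; exact map_zero _
  have haddU : ∀ x ∈ U, ∀ y ∈ U, x + y ∈ U := by
    rintro x hx y hy
    obtain ⟨n, hn⟩ := Set.mem_iUnion.mp hx
    obtain ⟨m, hm⟩ := Set.mem_iUnion.mp hy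
    have hmono : ∀ {k l : ℕ}, k ≤ l → ∀ {w : A}, (⇑α)^[k] w = 0 → (⇑α)^[l] w = 0 := by
      intro k l hkl w hw
      obtain ⟨j, rfl⟩ := Nat.exists_eq_add_of_le hkl
      rw [add_comm, Function.iterate_add_apply, hw, aux_iter_coe, map_zero]
    refine hmemU (n := max n m) ?_
    rw [show (⇑α)^[max n m + 1] (x + y) = (⇑α)^[max n m + 1] x + (⇑α)^[max n m + 1] y by
      rw [aux_iter_coe]; exact map_add _ _ _]
    rw [hmono (by omega) hn, hmono (by omega) hm, add_zero]
  have hmulU : ∀ x ∈ U, ∀ b : A, x * b ∈ U ∧ b * x ∈ U := by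
    rintro x hx b
    obtain ⟨n, hn⟩ := Set.mem_iUnion.mp hx
    have hn' : (α ^ (n + 1)) x = 0 := by rwa [aux_iter_coe] at hn
    constructor <;> refine hmemU (n := n) ?_ <;> rw [aux_iter_coe, map_mul, hn']
    · rw [zero_mul]
    · rw [mul_zero]
  have hsmulU : ∀ (c : ℂ), ∀ x ∈ U, c • x ∈ U := by
    rintro c x hx
    obtain ⟨n, hn⟩ := Set.mem_iUnion.mp hx
    have hn' : (α ^ (n + 1)) x = 0 := by rwa [aux_iter_coe] at hn
    refine hmemU (n := n) ?_
    rw [aux_iter_coe, map_smul, hn', smul_zero]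
  have hαU : ∀ x ∈ U, α x ∈ U := by
    rintro x hx
    obtain ⟨n, hn⟩ := Set.mem_iUnion.mp hx
    refine hmemU (n := n) ?_
    rw [← Function.iterate_succ_apply, Function.iterate_succ_apply', hn, map_zero]
  -- closure versions
  have hclosure_smul : ∀ (c : ℂ), ∀ x ∈ closure U, c • x ∈ closure U := fun c x hx =>
    map_mem_closure (continuous_const_smul c) hx (fun y hy => hsmulU c y hy)
  have hclosure_add : ∀ x ∈ closure U, ∀ y ∈ closure U, x + y ∈ closure U := by
    let S : AddSubmonoid A :=
      { carrier := U
        zero_mem' := hzeroU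
        add_mem' := fun hx hy => haddU _ hx _ hy }
    intro x hx y hy
    exact S.topologicalClosure.add_mem hx hy
  refine ⟨isClosed_closure, subset_closure hzeroU, fun a b ha hb => hclosure_add a ha b hb,
    fun a b ha => ⟨?_, ?_⟩, fun a ha => ?_, fun a ha => ?_⟩
  · exact map_mem_closure (f := (· * b)) (continuous_mul_right b) ha (fun y hy => (hmulU y hy b).1)
  · exact map_mem_closure (f := (b * ·)) (continuous_mul_left b) ha (fun y hy => (hmulU y hy b).2)
  · exact map_mem_closure (map_continuous α) ha hαU
  -- injectivity of the induced map
  have hdecay : ∀ ε > 0, ∃ n : ℕ, ‖(⇑α)^[n + 1] a‖ < ε := by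
    intro ε hε
    obtain ⟨b, hbU, hdist⟩ := Metric.mem_closure_iff.mp ha ε hε
    obtain ⟨m, hm⟩ := Set.mem_iUnion.mp hbU
    refine ⟨m + 1, ?_⟩
    calc ‖(⇑α)^[m + 1 + 1] a‖ = ‖(⇑α)^[m + 1] (α a) - (⇑α)^[m + 1] b‖ := by
          rw [Function.iterate_succ_apply, hm, sub_zero]
      _ = ‖(α ^ (m + 1)) (α a - b)‖ := by rw [aux_iter_coe, map_sub]
      _ ≤ ‖α a - b‖ := NonUnitalStarAlgHom.norm_apply_le _ _
      _ < ε := by rwa [dist_eq_norm] at hdist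
  set x : A := (2 : ℂ)⁻¹ • (a + star a) with hxdef
  set z : A := (-Complex.I * (2 : ℂ)⁻¹) • (a - star a) with hzdef
  have hxsa : IsSelfAdjoint x := by
    rw [IsSelfAdjoint, hxdef, star_smul, star_add, star_star]
    congr 1
    · simp
    · exact add_comm _ _
  have hzsa : IsSelfAdjoint z := by
    rw [IsSelfAdjoint, hzdef, star_smul, star_sub, star_star, ← neg_sub a (star a), smul_neg,
      ← neg_smul]
    congr 1
    simp [Complex.ext_iff]
  have hxle : ∀ n : ℕ, ‖(⇑α)^[n + 1] x‖ ≤ ‖(⇑α)^[n + 1] a‖ := by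
    intro n
    rw [aux_iter_coe]
    calc ‖(α ^ (n + 1)) x‖ = ‖(2 : ℂ)⁻¹ • ((α ^ (n + 1)) a + star ((α ^ (n + 1)) a))‖ := by
          rw [hxdef, map_smul, map_add, map_star]
      _ ≤ ‖(2 : ℂ)⁻¹‖ * (‖(α ^ (n + 1)) a‖ + ‖star ((α ^ (n + 1)) a)‖) := by
          rw [norm_smul]; gcongr; exact norm_add_le _ _
      _ = ‖(α ^ (n + 1)) a‖ := by rw [norm_star]; simp; ring
  have hzle : ∀ n : ℕ, ‖(⇑α)^[n + 1] z‖ ≤ ‖(⇑α)^[n + 1] a‖ := by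
    intro n
    rw [aux_iter_coe]
    calc ‖(α ^ (n + 1)) z‖
        = ‖(-Complex.I * (2 : ℂ)⁻¹) • ((α ^ (n + 1)) a - star ((α ^ (n + 1)) a))‖ := by
          rw [hzdef, map_smul, map_sub, map_star]
      _ ≤ ‖(-Complex.I * (2 : ℂ)⁻¹)‖ * (‖(α ^ (n + 1)) a‖ + ‖star ((α ^ (n + 1)) a)‖) := by
          rw [norm_smul]; gcongr; exact norm_sub_le _ _
      _ = ‖(α ^ (n + 1)) a‖ := by rw [norm_star]; simp [norm_mul]; ring
  have hxmem : x ∈ closure U := by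
    refine aux_selfAdjoint_mem α hxsa ?_
    intro ε hε
    obtain ⟨n, hn⟩ := hdecay ε hε
    exact ⟨n, lt_of_le_of_lt (hxle n) hn⟩
  have hzmem : z ∈ closure U := by
    refine aux_selfAdjoint_mem α hzsa ?_
    intro ε hε
    obtain ⟨n, hn⟩ := hdecay ε hε
    exact ⟨n, lt_of_le_of_lt (hzle n) hn⟩
  have hdecomp : a = x + Complex.I • z := by
    rw [hxdef, hzdef, smul_smul]
    rw [show Complex.I * (-Complex.I * (2 : ℂ)⁻¹) = (2 : ℂ)⁻¹ by
      rw [← mul_assoc, mul_neg, Complex.I_mul_I, neg_neg, one_mul]]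
    rw [← smul_add, show a + star a + (a - star a) = (2 : ℂ) • a by
      rw [two_smul]; abel]
    rw [smul_smul]
    norm_num
  rw [hdecomp]
  exact hclosure_add x hxmem _ (hclosure_smul Complex.I z hzmem)
end

section
/- Let A be a C*-algebra, α₁,…,α_n *-endomorphisms of A, and for x ∈ ℤ₊ⁿ \ {0} define I_x = ∩_{y ∈ x^⊥} α_y^{-1}((∩_{i ∈ supp(x)} ker α_i)^⊥), where J^⊥ = {a ∈ A : aJ = {0}} for an ideal J, and α_y = α₁^{y₁}∘⋯∘α_n^{y_n}. Then I_x is a closed two-sided ideal of A, and for any i with x_i = 0, I_x is invariant under α_i: α_i(I_x) ⊆ I_x. -/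
/-- Composition of the endomorphisms `αi` with multiplicities `y`. -/
def compPows {n : ℕ} {A : Type*} (αi : Fin n → A → A) (y : Fin n → ℕ) : A → A :=
  (List.ofFn fun i => (αi i)^[y i]).foldr (· ∘ ·) id


lemma compPows_zero' {A : Type*} (f : Fin 0 → A → A) (y : Fin 0 → ℕ) :
    compPows f y = id := by
  simp [compPows]

lemma compPows_succ {n : ℕ} {A : Type*} (f : Fin (n+1) → A → A) (y : Fin (n+1) → ℕ) :
    compPows f y = (f 0)^[y 0] ∘ compPows (fun i => f i.succ) (fun i => y i.succ) := by
  simp [compPows, List.ofFn_succ]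

lemma compPows_comm {n : ℕ} {A : Type*} (f : Fin n → A → A) (y : Fin n → ℕ)
    (h : A → A) (hc : ∀ j a, f j (h a) = h (f j a)) (a : A) :
    compPows f y (h a) = h (compPows f y a) := by
  induction n with
  | zero => simp [compPows_zero']
  | succ m ih =>
    rw [compPows_succ]
    simp only [Function.comp_apply]
    rw [ih (fun i => f i.succ) (fun i => y i.succ) (fun j a => hc j.succ a)]
    generalize compPows (fun i => f i.succ) (fun i => y i.succ) a = c
    induction y 0 with
    | zero => simp
    | succ k ihk => rw [Function.iterate_succ_apply', Function.iterate_succ_apply', ihk, hc]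

lemma compPows_step {n : ℕ} {A : Type*} (f : Fin n → A → A) (y : Fin n → ℕ) (i : Fin n)
    (hc : ∀ j a, f j (f i a) = f i (f j a)) (a : A) :
    compPows f y (f i a)
      = compPows f (fun j => y j + if j = i then 1 else 0) a := by
  induction n with
  | zero => exact absurd i.2 (Nat.not_lt_zero _)
  | succ m ih =>
    rw [compPows_succ, compPows_succ]
    simp only [Function.comp_apply]
    rcases Fin.eq_zero_or_eq_succ i with hi | ⟨k, hk⟩
    · subst hi
      rw [compPows_comm (fun i => f i.succ) _ (f 0) (fun j a => hc j.succ a)]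
      have hty : (fun i : Fin m => y i.succ + if i.succ = (0 : Fin (m+1)) then 1 else 0)
          = fun i => y i.succ := by
        funext j; simp [Fin.succ_ne_zero]
      rw [hty, if_pos rfl, ← Function.iterate_succ_apply]
    · subst hk
      rw [ih (fun j => f j.succ) (fun j => y j.succ) k (fun j a => hc j.succ a)]
      have h0 : (0 : Fin (m+1)) ≠ k.succ := (Fin.succ_ne_zero k).symm
      simp only [if_neg h0, Nat.add_zero]
      have hty : (fun j : Fin m => y j.succ + if j = k then 1 else 0)
          = fun i => y i.succ + if i.succ = k.succ then 1 else 0 := by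
        funext j
        by_cases hj : j = k
        · subst hj; simp
        · simp [hj, fun h => hj (Fin.succ_injective _ h)]
      rw [hty]

lemma compPows_hom {n : ℕ}
    {A : Type*} [NormedRing A] [StarRing A] [CStarRing A] [NormedAlgebra ℂ A]
    [StarModule ℂ A] [CompleteSpace A]
    (αi : Fin n → (A →⋆ₐ[ℂ] A)) (y : Fin n → ℕ) :
    ∃ φ : A →⋆ₐ[ℂ] A, compPows (fun i => ⇑(αi i)) y = ⇑φ := by
  induction n with
  | zero => exact ⟨StarAlgHom.id ℂ A, by rw [compPows_zero']; rfl⟩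
  | succ m ih =>
    obtain ⟨ψ, hψ⟩ := ih (fun i => αi i.succ) (fun i => y i.succ)
    have : ∀ k : ℕ, ∃ χ : A →⋆ₐ[ℂ] A, (⇑(αi 0))^[k] = ⇑χ := by
      intro k
      induction k with
      | zero => exact ⟨StarAlgHom.id ℂ A, rfl⟩
      | succ j ihj =>
        obtain ⟨χ, hχ⟩ := ihj
        exact ⟨(αi 0).comp χ, by rw [Function.iterate_succ', hχ]; rfl⟩
    obtain ⟨χ, hχ⟩ := this (y 0)
    refine ⟨χ.comp ψ, ?_⟩
    rw [compPows_succ, hψ, hχ]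
    rfl

/-- For commuting *-endomorphisms `α₁, …, α_n` of a C*-algebra `A` and
`x ∈ ℤ₊ⁿ \ {0}`, the ideal
`I_x = ⋂_{y ∈ x^⊥} α_y⁻¹((⋂_{i ∈ supp x} ker α_i)^⊥)` is a closed two-sided
ideal of `A`, invariant under `α_i` whenever `x_i = 0`. -/
theorem Ix_closed_ideal_invariant
    {n : ℕ}
    {A : Type*} [NormedRing A] [StarRing A] [CStarRing A] [NormedAlgebra ℂ A]
    [StarModule ℂ A] [CompleteSpace A]
    (αi : Fin n → (A →⋆ₐ[ℂ] A))
    (hcomm : ∀ (i j : Fin n) (a : A), αi i (αi j a) = αi j (αi i a))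
    (x : Fin n → ℕ) (hx : x ≠ 0) :
    IsClosed {a : A | ∀ y : Fin n → ℕ,
        ({i | y i ≠ 0} ∩ {i | x i ≠ 0} = (∅ : Set (Fin n))) →
        ∀ b : A, (∀ i, x i ≠ 0 → αi i b = 0) →
          compPows (fun i => ⇑(αi i)) y a * b = 0} ∧
    ((0 : A) ∈ {a : A | ∀ y : Fin n → ℕ,
        ({i | y i ≠ 0} ∩ {i | x i ≠ 0} = (∅ : Set (Fin n))) →
        ∀ b : A, (∀ i, x i ≠ 0 → αi i b = 0) →
          compPows (fun i => ⇑(αi i)) y a * b = 0}) ∧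
    (∀ a c : A,
      a ∈ {a : A | ∀ y : Fin n → ℕ,
        ({i | y i ≠ 0} ∩ {i | x i ≠ 0} = (∅ : Set (Fin n))) →
        ∀ b : A, (∀ i, x i ≠ 0 → αi i b = 0) →
          compPows (fun i => ⇑(αi i)) y a * b = 0} →
      c ∈ {a : A | ∀ y : Fin n → ℕ,
        ({i | y i ≠ 0} ∩ {i | x i ≠ 0} = (∅ : Set (Fin n))) →
        ∀ b : A, (∀ i, x i ≠ 0 → αi i b = 0) →
          compPows (fun i => ⇑(αi i)) y a * b = 0} →
      a + c ∈ {a : A | ∀ y : Fin n → ℕ,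
        ({i | y i ≠ 0} ∩ {i | x i ≠ 0} = (∅ : Set (Fin n))) →
        ∀ b : A, (∀ i, x i ≠ 0 → αi i b = 0) →
          compPows (fun i => ⇑(αi i)) y a * b = 0}) ∧
    (∀ a c : A,
      a ∈ {a : A | ∀ y : Fin n → ℕ,
        ({i | y i ≠ 0} ∩ {i | x i ≠ 0} = (∅ : Set (Fin n))) →
        ∀ b : A, (∀ i, x i ≠ 0 → αi i b = 0) →
          compPows (fun i => ⇑(αi i)) y a * b = 0} →
      (a * c ∈ {a : A | ∀ y : Fin n → ℕ,
        ({i | y i ≠ 0} ∩ {i | x i ≠ 0} = (∅ : Set (Fin n))) →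
        ∀ b : A, (∀ i, x i ≠ 0 → αi i b = 0) →
          compPows (fun i => ⇑(αi i)) y a * b = 0} ∧
      c * a ∈ {a : A | ∀ y : Fin n → ℕ,
        ({i | y i ≠ 0} ∩ {i | x i ≠ 0} = (∅ : Set (Fin n))) →
        ∀ b : A, (∀ i, x i ≠ 0 → αi i b = 0) →
          compPows (fun i => ⇑(αi i)) y a * b = 0})) ∧
    (∀ i : Fin n, x i = 0 → ∀ a : A,
      a ∈ {a : A | ∀ y : Fin n → ℕ,
        ({i | y i ≠ 0} ∩ {i | x i ≠ 0} = (∅ : Set (Fin n))) →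
        ∀ b : A, (∀ i, x i ≠ 0 → αi i b = 0) →
          compPows (fun i => ⇑(αi i)) y a * b = 0} →
      αi i a ∈ {a : A | ∀ y : Fin n → ℕ,
        ({i | y i ≠ 0} ∩ {i | x i ≠ 0} = (∅ : Set (Fin n))) →
        ∀ b : A, (∀ i, x i ≠ 0 → αi i b = 0) →
          compPows (fun i => ⇑(αi i)) y a * b = 0}) := by
  letI : CStarAlgebra A := { }
  have hcont : ∀ φ : A →⋆ₐ[ℂ] A, Continuous ⇑φ := fun φ =>
    AddMonoidHomClass.continuous_of_bound φ 1 fun a => by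
      simpa using NonUnitalStarAlgHom.norm_apply_le φ a
  refine ⟨?_, ?_, ?_, ?_, ?_⟩
  · have hset : {a : A | ∀ y : Fin n → ℕ,
        ({i | y i ≠ 0} ∩ {i | x i ≠ 0} = (∅ : Set (Fin n))) →
        ∀ b : A, (∀ i, x i ≠ 0 → αi i b = 0) →
          compPows (fun i => ⇑(αi i)) y a * b = 0}
        = ⋂ (y : Fin n → ℕ)
            (_ : {i | y i ≠ 0} ∩ {i | x i ≠ 0} = (∅ : Set (Fin n)))
            (b : A) (_ : ∀ i, x i ≠ 0 → αi i b = 0),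
            {a : A | compPows (fun i => ⇑(αi i)) y a * b = 0} := by
      ext a
      simp only [Set.mem_setOf_eq, Set.mem_iInter]
    rw [hset]
    refine isClosed_iInter fun y => isClosed_iInter fun _ =>
      isClosed_iInter fun b => isClosed_iInter fun _ => ?_
    obtain ⟨φ, hφ⟩ := compPows_hom αi y
    rw [hφ]
    exact isClosed_eq ((hcont φ).mul continuous_const) continuous_const
  · intro y hy b hb
    obtain ⟨φ, hφ⟩ := compPows_hom αi y
    rw [hφ, map_zero, zero_mul]
  · intro a c ha hc y hy b hb
    obtain ⟨φ, hφ⟩ := compPows_hom αi y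
    have h1 := ha y hy b hb
    have h2 := hc y hy b hb
    rw [hφ] at h1 h2 ⊢
    rw [map_add, add_mul, h1, h2, add_zero]
  · intro a c ha
    constructor
    · intro y hy b hb
      obtain ⟨φ, hφ⟩ := compPows_hom αi y
      have h := ha y hy (φ c * b) fun i hi => by rw [map_mul, hb i hi, mul_zero]
      rw [hφ] at h
      rw [hφ, map_mul, mul_assoc]
      exact h
    · intro y hy b hb
      obtain ⟨φ, hφ⟩ := compPows_hom αi y
      have h := ha y hy b hb
      rw [hφ] at h
      rw [hφ, map_mul, mul_assoc, h, mul_zero]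
  · intro i hxi a ha y hy b hb
    have hstep := compPows_step (fun j => ⇑(αi j)) y i (fun j a => hcomm j i a) a
    have : compPows (fun j => ⇑(αi j)) y (αi i a)
        = compPows (fun j => ⇑(αi j)) (fun j => y j + if j = i then 1 else 0) a := hstep
    rw [this]
    refine ha (fun j => y j + if j = i then 1 else 0) ?_ b hb
    rw [Set.eq_empty_iff_forall_notMem]
    rintro j ⟨hj1, hj2⟩
    by_cases hji : j = i
    · subst hji
      exact hj2 hxi
    · have hyj : y j ≠ 0 := by simpa [hji] using hj1
      exact Set.eq_empty_iff_forall_notMem.mp hy j ⟨hyj, hj2⟩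
end

section
/- Let σ₁, σ₂, τ₁, τ₂ : [0,1] → [0,1] be defined by σ₁(x) = 2x on [0,1/3], 1−x on [1/3,1]; σ₂(x) = 1−x on [0,2/3], 2x−1 on [2/3,1]; τ₁(x) = 2x on [0,1/3], 1−x on [1/3,2/3], 2x−1 on [2/3,1]; τ₂(x) = 1−x. Then with U_id = [0,2/3) and U_(12) = (1/3,1]: these two sets form an open cover of [0,1], σ₁ = τ₁ and σ₂ = τ₂ on U_id, while σ₁ = τ₂ and σ₂ = τ₁ on U_(12); moreover all four maps are continuous. -/
noncomputable def sigma1 : ℝ → ℝ := fun x => if x ≤ 1/3 then 2*x else 1 - x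

noncomputable def sigma2 : ℝ → ℝ := fun x => if x ≤ 2/3 then 1 - x else 2*x - 1

noncomputable def tau1 : ℝ → ℝ :=
  fun x => if x ≤ 1/3 then 2*x else if x ≤ 2/3 then 1 - x else 2*x - 1

noncomputable def tau2 : ℝ → ℝ := fun x => 1 - x

lemma sigma1_cont : Continuous sigma1 := by
  unfold sigma1
  apply Continuous.if_le (by continuity) (by continuity) continuous_id continuous_const
  intro x hx; simp only [id] at hx; subst hx; norm_num

lemma sigma2_cont : Continuous sigma2 := by
  unfold sigma2
  apply Continuous.if_le (by continuity) (by continuity) continuous_id continuous_const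
  intro x hx; simp only [id] at hx; subst hx; norm_num

lemma tau1_cont : Continuous tau1 := by
  have : tau1 = fun x => if x ≤ 1/3 then 2*x else sigma2 x := by
    funext x; unfold tau1 sigma2; rfl
  rw [this]
  apply Continuous.if_le (by continuity) sigma2_cont continuous_id continuous_const
  intro x hx; simp only [id] at hx; subst hx; unfold sigma2; norm_num

lemma tau2_cont : Continuous tau2 := by unfold tau2; continuity

/-- The systems `([0,1], {σ₁, σ₂})` and `([0,1], {τ₁, τ₂})` are piecewise
conjugate via the identity map: `U_id = [0,1] ∩ (-∞, 2/3)` and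
`U_(12) = [0,1] ∩ (1/3, ∞)` form a relatively open cover of `[0,1]`, on the
first set `σ₁ = τ₁` and `σ₂ = τ₂`, on the second `σ₁ = τ₂` and `σ₂ = τ₁`, and
all four maps are continuous on `[0,1]`. -/
theorem piecewise_conjugacy_example :
    IsOpen (Set.Iio (2/3 : ℝ)) ∧ IsOpen (Set.Ioi (1/3 : ℝ)) ∧
    (Set.Icc (0:ℝ) 1 ⊆ Set.Iio (2/3 : ℝ) ∪ Set.Ioi (1/3 : ℝ)) ∧
    (∀ x ∈ Set.Icc (0:ℝ) 1 ∩ Set.Iio (2/3 : ℝ),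
      sigma1 x = tau1 x ∧ sigma2 x = tau2 x) ∧
    (∀ x ∈ Set.Icc (0:ℝ) 1 ∩ Set.Ioi (1/3 : ℝ),
      sigma1 x = tau2 x ∧ sigma2 x = tau1 x) ∧
    ContinuousOn sigma1 (Set.Icc 0 1) ∧ ContinuousOn sigma2 (Set.Icc 0 1) ∧
    ContinuousOn tau1 (Set.Icc 0 1) ∧ ContinuousOn tau2 (Set.Icc 0 1) := by
  refine ⟨isOpen_Iio, isOpen_Ioi, ?_, ?_, ?_, sigma1_cont.continuousOn,
    sigma2_cont.continuousOn, tau1_cont.continuousOn, tau2_cont.continuousOn⟩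
  · intro x hx
    rcases lt_or_ge x (2/3) with h | h
    · exact Or.inl h
    · exact Or.inr (by simp; linarith)
  · rintro x ⟨⟨h0, h1⟩, hlt⟩
    simp only [Set.mem_Iio] at hlt
    unfold sigma1 sigma2 tau1 tau2
    constructor
    · split_ifs with h h2 <;> first | rfl | linarith
    · split_ifs with h <;> first | rfl | linarith
  · rintro x ⟨⟨h0, h1⟩, hgt⟩
    simp only [Set.mem_Ioi] at hgt
    unfold sigma1 sigma2 tau1 tau2
    constructor
    · split_ifs with h <;> first | rfl | linarith
    · split_ifs with h h2 <;> first | rfl | linarith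
end
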